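/- For any Motzkin path mz of width n and area A, let f_i denote the number of H moves of mz made at height i, and p_i the number of U moves of mz ending at height i. Then for every height i ≥ 1, the number of U moves ending at height i equals the number of D moves starting at height i; moreover, if h is the maximum height of mz, then p_1, ..., p_h > 0, and the sequence a^(mz) = (f_0, p_1, f_1, ..., p_h, f_h) satisfies (f_0 + f_1 + ... + f_h) + 2(p_1 + ... + p_h) = n and (0·f_0 + 1·f_1 + ... + h·f_h) + (1·p_1 + 3·p_2 + ... + (2h−1)·p_h) = A; that is, a^(mz) is a building sequence in S(n,A). -/

import Mathlib

/-- Moves of a Motzkin path: Up-right, Horizontal-right, Down-right. -/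
inductive Move : Type
  | U : Move
  | H : Move
  | D : Move
deriving DecidableEq

open Move

/-- The vertical step of a move. -/
def Move.step : Move → ℤ
  | U => 1
  | H => 0
  | D => -1

/-- The height of a path after its first `i` moves. -/
def heightAt (mz : List Move) (i : ℕ) : ℤ :=
  ((mz.take i).map Move.step).sum

/-- A word over {U,H,D} is a Motzkin path if it never goes below the x-axis
and ends on the x-axis. -/
def IsMotzkin (mz : List Move) : Prop :=
  (∀ i, 0 ≤ heightAt mz i) ∧ heightAt mz mz.length = 0

/-- The area between the x-axis and the path (sum of heights at integer points). -/
def area (mz : List Move) : ℤ :=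
  ∑ i ∈ Finset.range (mz.length + 1), heightAt mz i

/-- `MZ n A` is the set of Motzkin paths of width `n` and area `A`. -/
def MZ (n A : ℕ) : Set (List Move) :=
  {mz | mz.length = n ∧ IsMotzkin mz ∧ area mz = A}

/-- The weight `ω_i` of the `i`-th move (0-indexed): it is `h_i` for U and D moves
(height after the move for U, before the move for D) and `2h_i + 1` for H moves. -/
def moveWeight (mz : List Move) (i : ℕ) : ℤ :=
  match mz[i]? with
  | some U => heightAt mz (i + 1)
  | some D => heightAt mz i
  | some H => 2 * heightAt mz i + 1
  | none => 1

/-- The weight `ω(mz)` of a Motzkin path. -/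
def weight (mz : List Move) : ℤ :=
  ∏ i ∈ Finset.range mz.length, moveWeight mz i

/-- The total displacement `D(π) = Σ_i |i - π(i)|` of a permutation. -/
def totalDisp {n : ℕ} (π : Equiv.Perm (Fin n)) : ℤ :=
  ∑ i : Fin n, |((π i : ℕ) : ℤ) - ((i : ℕ) : ℤ)|

/-- The word over {U,H,D} associated to a permutation. -/
def toPath {n : ℕ} (π : Equiv.Perm (Fin n)) : List Move :=
  (List.finRange n).map fun i : Fin n =>
    if (i : ℕ) < (π i : ℕ) ∧ (i : ℕ) < (π.symm i : ℕ) then U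
    else if (π i : ℕ) < (i : ℕ) ∧ (π.symm i : ℕ) < (i : ℕ) then D
    else H

/-- The last fall length: the length of the maximal suffix consisting of D moves. -/
def lastFall (mz : List Move) : ℕ :=
  (mz.reverse.takeWhile (fun m => decide (m = D))).length

/-- The maximum height of a path. -/
def maxHeight (mz : List Move) : ℕ :=
  (Finset.range (mz.length + 1)).sup fun i => (heightAt mz i).toNat

/-- `flatsAt mz k` is the number of H moves of `mz` made at height `k`. -/
def flatsAt (mz : List Move) (k : ℕ) : ℕ :=
  ((Finset.range mz.length).filter fun j => mz[j]? = some H ∧ heightAt mz j = (k : ℤ)).card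

/-- `peaksAt mz k` is the number of U moves of `mz` ending at height `k`. -/
def peaksAt (mz : List Move) (k : ℕ) : ℕ :=
  ((Finset.range mz.length).filter fun j => mz[j]? = some U ∧ heightAt mz (j + 1) = (k : ℤ)).card

/-- `downsAt mz k` is the number of D moves of `mz` starting at height `k`. -/
def downsAt (mz : List Move) (k : ℕ) : ℕ :=
  ((Finset.range mz.length).filter fun j => mz[j]? = some D ∧ heightAt mz j = (k : ℤ)).card

/-- A candidate building sequence `(f_0, p_1, f_1, …, p_h, f_h)`, recorded as its
height `h` together with the flat counts `f` and peak counts `p`. -/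
structure BSeq where
  h : ℕ
  f : ℕ → ℕ
  p : ℕ → ℕ

/-- `Sset n A` is the set of building sequences for width `n` and area `A`:
all `p`-entries `p_1, …, p_h` are positive, entries beyond the height are zero, and the
width and area conditions hold. -/
def Sset (n A : ℕ) : Set BSeq :=
  {a | (∀ i, 1 ≤ i → i ≤ a.h → 0 < a.p i) ∧
       a.p 0 = 0 ∧
       (∀ i, a.h < i → a.p i = 0) ∧
       (∀ i, a.h < i → a.f i = 0) ∧
       (∑ i ∈ Finset.range (a.h + 1), a.f i) + 2 * (∑ i ∈ Finset.Icc 1 a.h, a.p i) = n ∧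
       (∑ i ∈ Finset.range (a.h + 1), i * a.f i) +
         (∑ i ∈ Finset.Icc 1 a.h, (2 * i - 1) * a.p i) = A}

/-- `mz` has building sequence `a`. -/
def hasBuildSeq (mz : List Move) (a : BSeq) : Prop :=
  maxHeight mz = a.h ∧ (∀ i, flatsAt mz i = a.f i) ∧ (∀ i, peaksAt mz i = a.p i)

/-- `perm(a) = ∏_{i=0}^h (2i+1)^{f_i} · ∏_{i=1}^h i^{2p_i}`. -/
def permWeight (a : BSeq) : ℕ :=
  (∏ i ∈ Finset.range (a.h + 1), (2 * i + 1) ^ a.f i) *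
    ∏ i ∈ Finset.Icc 1 a.h, i ^ (2 * a.p i)

/-- `m(a)`, the number of Motzkin paths with building sequence `a`. -/
def mcount (a : BSeq) : ℕ :=
  Nat.choose (a.f a.h + a.p a.h - 1) (a.p a.h - 1) *
    (∏ i ∈ Finset.Icc 1 (a.h - 1),
      Nat.choose (a.p (i + 1) + a.f i) (a.f i) *
        Nat.choose (a.p (i + 1) + a.f i + a.p i - 1) (a.p i - 1)) *
    Nat.choose (a.p 1 + a.f 0) (a.f 0)

/-- `M(n,A,l)`: the number of Motzkin paths of width `n`, area `A` and last fall length `l`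
(for negative arguments there are no such paths, so the value is `0`; the value at
`(0,0,0)` is `1`, counting the empty path). -/
noncomputable def Mcount (n A l : ℤ) : ℕ :=
  Nat.card {mz : List Move // (mz.length : ℤ) = n ∧ IsMotzkin mz ∧ area mz = A ∧
    (lastFall mz : ℤ) = l}

/-- `D(n,d,l)`: the sum of the weights of all Motzkin paths of width `n`, area `d` and
last fall length `l`. -/
noncomputable def Dw (n d l : ℤ) : ℤ :=
  ∑ᶠ mz ∈ {mz : List Move | (mz.length : ℤ) = n ∧ IsMotzkin mz ∧ area mz = d ∧
    (lastFall mz : ℤ) = l}, weight mz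

/-- `M(n,A,h,p)`: the number of Motzkin paths of width `n`, area `A`, maximum height `h`,
with exactly `p` U-moves ending at height `h` and no H-moves at height `h`. -/
noncomputable def Mtop (n A h p : ℤ) : ℕ :=
  Nat.card {mz : List Move // (mz.length : ℤ) = n ∧ IsMotzkin mz ∧ area mz = A ∧
    (maxHeight mz : ℤ) = h ∧ (peaksAt mz h.toNat : ℤ) = p ∧ flatsAt mz h.toNat = 0}

/-- `D(n,d,h,p)`: the sum of weights of Motzkin paths of width `n`, area `d`,
maximum height `h`, with exactly `p` U-moves ending at height `h` and no H-moves at height `h`. -/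
noncomputable def Dtop (n d h p : ℤ) : ℤ :=
  ∑ᶠ mz ∈ {mz : List Move | (mz.length : ℤ) = n ∧ IsMotzkin mz ∧ area mz = d ∧
    (maxHeight mz : ℤ) = h ∧ (peaksAt mz h.toNat : ℤ) = p ∧ flatsAt mz h.toNat = 0}, weight mz

/-- The area under the first `i` moves of a path (trapezoid rule; may be a half-integer). -/
def prefixArea (mz : List Move) (i : ℕ) : ℚ :=
  ∑ j ∈ Finset.range i, ((heightAt mz j : ℚ) + (heightAt mz (j + 1) : ℚ)) / 2

/-!
For `i ≥ 1`, the U moves ending at height `i` and the D moves starting at height `i` are the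
upward and downward crossings of the level between `i - 1` and `i`; their difference telescopes
along the path, and a path from height `0` back to height `0` crosses every level equally often
in both directions, so `p_i = d_i`. A level `i ≤ h` is reached one unit at a time, hence by a
U move ending at `i`, so `p_i > 0`. Sorting the moves by type and height, the width counts
`f_i + p_i + d_i` and the area, i.e. the sum of the heights after each move, counts `i` for an
H move at `i`, `i` for a U move ending at `i` and `i - 1` for a D move starting at `i`;
substituting `d_i = p_i` gives both identities.
-/

open Finset

lemma sum_mul_card_filter_eq_sum_ite {ι : Type*} {s : Finset ι} {t : Finset ℕ} {P : ι → Prop}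
    [DecidablePred P] {v : ι → ℤ} (hv : ∀ j ∈ s, P j → ∃ i ∈ t, v j = i) (c : ℤ → ℤ) :
    ∑ i ∈ t, c i * #{j ∈ s | P j ∧ v j = i} = ∑ j ∈ s, if P j then c (v j) else 0 := by
  simp_rw [card_filter, Nat.cast_sum, mul_sum]
  rw [sum_comm]
  refine sum_congr rfl fun j hj => ?_
  by_cases hP : P j
  · obtain ⟨i, hi, hvi⟩ := hv j hj hP
    rw [sum_eq_single_of_mem i hi fun k _ hki => by simp [hvi, hki.symm]]
    simp [hP, hvi]
  · simp [hP]

section MotzkinPath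

variable {mz : List Move}

lemma heightAt_zero : heightAt mz 0 = 0 := rfl

lemma heightAt_succ {j : ℕ} {m : Move} (hm : mz[j]? = some m) :
    heightAt mz (j + 1) = heightAt mz j + m.step := by
  simp [heightAt, List.take_add_one, hm]

lemma heightAt_le_maxHeight {i : ℕ} (hi : i ≤ mz.length) : heightAt mz i ≤ maxHeight mz := by
  refine (Int.self_le_toNat _).trans ?_
  exact_mod_cast le_sup (f := fun i => (heightAt mz i).toNat) (mem_range.2 (Nat.lt_succ_of_le hi))

lemma exists_le_heightAt_of_le_maxHeight {i : ℕ} (hi : 0 < i) (hih : i ≤ maxHeight mz) :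
    ∃ m ≤ mz.length, (i : ℤ) ≤ heightAt mz m := by
  obtain ⟨m, hm, him⟩ := (Finset.le_sup_iff hi).1 hih
  exact ⟨m, Nat.lt_succ_iff.1 (mem_range.1 hm), by omega⟩

lemma exists_up_ending_at {i m : ℕ} (hi : 0 < i) (hm : m ≤ mz.length)
    (him : (i : ℤ) ≤ heightAt mz m) : ∃ j < m, mz[j]? = some U ∧ heightAt mz (j + 1) = i := by
  induction m with
  | zero => rw [heightAt_zero] at him; omega
  | succ m ih =>
    by_cases hprev : (i : ℤ) ≤ heightAt mz m
    · obtain ⟨j, hj, hU⟩ := ih (by omega) hprev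
      exact ⟨j, by omega, hU⟩
    · obtain ⟨mv, hmv⟩ : ∃ mv, mz[m]? = some mv := ⟨_, List.getElem?_eq_getElem (by omega)⟩
      have hstep := heightAt_succ hmv
      cases mv <;> simp only [Move.step] at hstep
      · exact ⟨m, by omega, hmv, by omega⟩
      all_goals omega

lemma peaksAt_pos {i : ℕ} (hi : 0 < i) (hih : i ≤ maxHeight mz) : 0 < peaksAt mz i := by
  obtain ⟨m, hm, him⟩ := exists_le_heightAt_of_le_maxHeight hi hih
  obtain ⟨j, hj, hU, hji⟩ := exists_up_ending_at hi hm him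
  exact card_pos.2 ⟨j, mem_filter.2 ⟨mem_range.2 (by omega), hU, hji⟩⟩

lemma up_indicator_sub_down_indicator {j : ℕ} (hj : j < mz.length) (i : ℤ) :
    ((if mz[j]? = some U ∧ heightAt mz (j + 1) = i then 1 else 0) -
        (if mz[j]? = some D ∧ heightAt mz j = i then 1 else 0) : ℤ) =
      (if i ≤ heightAt mz (j + 1) then 1 else 0) - (if i ≤ heightAt mz j then 1 else 0) := by
  obtain ⟨m, hm⟩ : ∃ m, mz[j]? = some m := ⟨_, List.getElem?_eq_getElem hj⟩
  have hstep := heightAt_succ hm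
  cases m <;> simp [hm, hstep, Move.step] <;> split_ifs <;> omega

lemma peaksAt_eq_downsAt (hend : heightAt mz mz.length = 0) (i : ℕ) :
    peaksAt mz i = downsAt mz i := by
  have hcross : (peaksAt mz i : ℤ) - downsAt mz i =
      ∑ j ∈ range mz.length, ((if (i : ℤ) ≤ heightAt mz (j + 1) then 1 else 0) -
        (if (i : ℤ) ≤ heightAt mz j then 1 else 0)) := by
    simp only [peaksAt, downsAt, card_filter, Nat.cast_sum, Nat.cast_ite, Nat.cast_one,
      Nat.cast_zero, ← sum_sub_distrib]
    exact sum_congr rfl fun j hj => up_indicator_sub_down_indicator (mem_range.1 hj) i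
  rw [sum_range_sub (fun j => if (i : ℤ) ≤ heightAt mz j then (1 : ℤ) else 0), hend,
    heightAt_zero] at hcross
  rwa [sub_self, sub_eq_zero, Nat.cast_inj] at hcross

lemma sum_mul_flatsAt (hnn : ∀ i, 0 ≤ heightAt mz i) (c : ℤ → ℤ) :
    ∑ i ∈ range (maxHeight mz + 1), c i * flatsAt mz i =
      ∑ j ∈ range mz.length, if mz[j]? = some H then c (heightAt mz j) else 0 := by
  refine sum_mul_card_filter_eq_sum_ite (fun j hj _ => ?_) c
  have hle := heightAt_le_maxHeight (mz := mz) (mem_range.1 hj).le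
  exact ⟨(heightAt mz j).toNat, mem_range.2 (by omega), by have := hnn j; omega⟩

lemma sum_mul_peaksAt (hnn : ∀ i, 0 ≤ heightAt mz i) (c : ℤ → ℤ) :
    ∑ i ∈ Icc 1 (maxHeight mz), c i * peaksAt mz i =
      ∑ j ∈ range mz.length, if mz[j]? = some U then c (heightAt mz (j + 1)) else 0 := by
  refine sum_mul_card_filter_eq_sum_ite (fun j hj hU => ?_) c
  have hle := heightAt_le_maxHeight (mz := mz) (i := j + 1) (mem_range.1 hj)
  have hstep : heightAt mz (j + 1) = heightAt mz j + 1 := heightAt_succ hU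
  have := hnn j
  exact ⟨(heightAt mz (j + 1)).toNat, mem_Icc.2 ⟨by omega, by omega⟩, by omega⟩

lemma sum_mul_downsAt (hnn : ∀ i, 0 ≤ heightAt mz i) (c : ℤ → ℤ) :
    ∑ i ∈ Icc 1 (maxHeight mz), c i * downsAt mz i =
      ∑ j ∈ range mz.length, if mz[j]? = some D then c (heightAt mz j) else 0 := by
  refine sum_mul_card_filter_eq_sum_ite (fun j hj hD => ?_) c
  have hle := heightAt_le_maxHeight (mz := mz) (mem_range.1 hj).le
  have hstep : heightAt mz (j + 1) = heightAt mz j - 1 := heightAt_succ hD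
  have := hnn (j + 1)
  exact ⟨(heightAt mz j).toNat, mem_Icc.2 ⟨by omega, by omega⟩, by omega⟩

lemma sum_flatsAt_add_sum_peaksAt_add_sum_downsAt (hnn : ∀ i, 0 ≤ heightAt mz i) :
    ∑ i ∈ range (maxHeight mz + 1), flatsAt mz i + ∑ i ∈ Icc 1 (maxHeight mz), peaksAt mz i +
      ∑ i ∈ Icc 1 (maxHeight mz), downsAt mz i = mz.length := by
  have hflats := sum_mul_flatsAt hnn (fun _ => 1)
  have hpeaks := sum_mul_peaksAt hnn (fun _ => 1)
  have hdowns := sum_mul_downsAt hnn (fun _ => 1)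
  simp only [one_mul] at hflats hpeaks hdowns
  zify
  rw [hflats, hpeaks, hdowns, ← sum_add_distrib, ← sum_add_distrib]
  trans ∑ _j ∈ range mz.length, (1 : ℤ)
  · refine sum_congr rfl fun j hj => ?_
    obtain ⟨m, hm⟩ : ∃ m, mz[j]? = some m := ⟨_, List.getElem?_eq_getElem (mem_range.1 hj)⟩
    cases m <;> simp [hm]
  · simp

lemma area_eq_sum_mul_flatsAt_add_sum_mul_peaksAt_add_sum_mul_downsAt
    (hnn : ∀ i, 0 ≤ heightAt mz i) :
    area mz = ∑ i ∈ range (maxHeight mz + 1), (i : ℤ) * flatsAt mz i +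
      ∑ i ∈ Icc 1 (maxHeight mz), (i : ℤ) * peaksAt mz i +
      ∑ i ∈ Icc 1 (maxHeight mz), ((i : ℤ) - 1) * downsAt mz i := by
  rw [sum_mul_flatsAt hnn (fun x => x), sum_mul_peaksAt hnn (fun x => x),
    sum_mul_downsAt hnn (fun x => x - 1), ← sum_add_distrib, ← sum_add_distrib, area,
    sum_range_succ', heightAt_zero, add_zero]
  refine sum_congr rfl fun j hj => ?_
  obtain ⟨m, hm⟩ : ∃ m, mz[j]? = some m := ⟨_, List.getElem?_eq_getElem (mem_range.1 hj)⟩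
  have hstep := heightAt_succ hm
  cases m <;> simp [hm, hstep, Move.step, sub_eq_add_neg]

lemma peaksAt_zero (hnn : ∀ i, 0 ≤ heightAt mz i) : peaksAt mz 0 = 0 := by
  refine card_eq_zero.2 (filter_eq_empty_iff.2 fun j _ ⟨hU, hj⟩ => ?_)
  have hstep : heightAt mz (j + 1) = heightAt mz j + 1 := heightAt_succ hU
  have := hnn j
  omega

lemma peaksAt_eq_zero_of_maxHeight_lt {i : ℕ} (hi : maxHeight mz < i) : peaksAt mz i = 0 := by
  refine card_eq_zero.2 (filter_eq_empty_iff.2 fun j hj ⟨_, hji⟩ => ?_)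
  have := heightAt_le_maxHeight (mz := mz) (i := j + 1) (mem_range.1 hj)
  omega

lemma flatsAt_eq_zero_of_maxHeight_lt {i : ℕ} (hi : maxHeight mz < i) : flatsAt mz i = 0 := by
  refine card_eq_zero.2 (filter_eq_empty_iff.2 fun j hj ⟨_, hji⟩ => ?_)
  have := heightAt_le_maxHeight (mz := mz) (mem_range.1 hj).le
  omega

lemma sum_flatsAt_add_two_mul_sum_peaksAt (hM : IsMotzkin mz) :
    ∑ i ∈ range (maxHeight mz + 1), flatsAt mz i +
      2 * ∑ i ∈ Icc 1 (maxHeight mz), peaksAt mz i = mz.length := by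
  have h := sum_flatsAt_add_sum_peaksAt_add_sum_downsAt hM.1
  simp only [← peaksAt_eq_downsAt hM.2] at h
  omega

lemma sum_mul_flatsAt_add_sum_mul_peaksAt (hM : IsMotzkin mz) :
    ((∑ i ∈ range (maxHeight mz + 1), i * flatsAt mz i +
      ∑ i ∈ Icc 1 (maxHeight mz), (2 * i - 1) * peaksAt mz i : ℕ) : ℤ) = area mz := by
  have hpeaks : ((∑ i ∈ Icc 1 (maxHeight mz), (2 * i - 1) * peaksAt mz i : ℕ) : ℤ) =
      ∑ i ∈ Icc 1 (maxHeight mz), ((i : ℤ) * peaksAt mz i + ((i : ℤ) - 1) * downsAt mz i) := by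
    rw [Nat.cast_sum]
    refine sum_congr rfl fun i hi => ?_
    rw [← peaksAt_eq_downsAt hM.2, Nat.cast_mul, Nat.cast_sub (by have := (mem_Icc.1 hi).1; omega)]
    push_cast
    ring
  rw [area_eq_sum_mul_flatsAt_add_sum_mul_peaksAt_add_sum_mul_downsAt hM.1, Nat.cast_add, hpeaks,
    sum_add_distrib, Nat.cast_sum]
  push_cast
  ring

end MotzkinPath

/-- for any Motzkin path `mz` of width `n` and area `A`: the number of U moves
ending at each height `i ≥ 1` equals the number of D moves starting at height `i`;
`p_1, …, p_h > 0` where `h` is the maximum height; the width and area conditions hold;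
that is, `a^(mz)` is a building sequence in `S(n,A)`. -/
theorem building_sequence_of_motzkin_path (n A : ℕ) (mz : List Move) (hmz : mz ∈ MZ n A) :
    (∀ i, 1 ≤ i → peaksAt mz i = downsAt mz i) ∧
    (∀ i, 1 ≤ i → i ≤ maxHeight mz → 0 < peaksAt mz i) ∧
    (∑ i ∈ Finset.range (maxHeight mz + 1), flatsAt mz i) +
      2 * (∑ i ∈ Finset.Icc 1 (maxHeight mz), peaksAt mz i) = n ∧
    (∑ i ∈ Finset.range (maxHeight mz + 1), i * flatsAt mz i) +
      (∑ i ∈ Finset.Icc 1 (maxHeight mz), (2 * i - 1) * peaksAt mz i) = A ∧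
    BSeq.mk (maxHeight mz) (flatsAt mz) (peaksAt mz) ∈ Sset n A := by
  obtain ⟨rfl, hM, hA⟩ := hmz
  have hpos : ∀ i, 1 ≤ i → i ≤ maxHeight mz → 0 < peaksAt mz i := fun _ hi => peaksAt_pos hi
  have hwidth := sum_flatsAt_add_two_mul_sum_peaksAt hM
  have harea := Nat.cast_inj.1 ((sum_mul_flatsAt_add_sum_mul_peaksAt hM).trans hA)
  exact ⟨fun i _ => peaksAt_eq_downsAt hM.2 i, hpos, hwidth, harea, hpos, peaksAt_zero hM.1,
    fun _ => peaksAt_eq_zero_of_maxHeight_lt, fun _ => flatsAt_eq_zero_of_maxHeight_lt,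
    hwidth, harea⟩
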